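/- arXiv:2203.10323 — 2 statements merged into one kernel-verified Lean document; each statement's English description precedes it below -/
import Mathlib

section
/- For the discretized Laplacian noise with PMF p_θ(k) = ((1 − e^{−Δ/λ})/2)·e^{(μ−k)/λ} for k ≥ μ and p_θ(k) = ((e^{Δ/λ} − 1)/2)·e^{(k−μ)/λ} for k ≤ μ − Δ (k ∈ Δℤ, λ > 0, μ ∈ Δℤ), the adjacent probability ratio satisfies p_θ(k − m₀)/p_θ(k) ≤ e^{(m+Δ)/λ} for all k ∈ Δℤ and all m₀ ∈ [−m, m] ∩ Δℤ. -/
/-- Discretized Laplacian PMF on the lattice `Δℤ` (index `k : ℤ` stands for the point `k·Δ`),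
with location `μ·Δ` and scale `λ`. -/
noncomputable def lapPMF (Δ lam : ℝ) (μ : ℤ) (k : ℤ) : ℝ :=
  if μ ≤ k then ((1 - Real.exp (-Δ / lam)) / 2) * Real.exp ((Δ * μ - Δ * k) / lam)
  else ((Real.exp (Δ / lam) - 1) / 2) * Real.exp ((Δ * k - Δ * μ) / lam)

/-!
Since `(e^{Δ/λ} - 1)/2 = e^{Δ/λ} (1 - e^{-Δ/λ})/2`, both branches of the PMF have the form
`A e^{-(Δ/λ) d(k)}`, where `d(k)` is the distance from `k` to the pair `{μ - 1, μ}`. As `d` is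
`1`-Lipschitz, shifting `k` by `j` changes the PMF by a factor at most `e^{(Δ/λ)|j|}`.
-/

open Real

def lapDist (μ k : ℤ) : ℤ := max (k - μ) (μ - 1 - k)

lemma lapDist_sub_le (μ a b : ℤ) : lapDist μ a - lapDist μ b ≤ |a - b| := by
  calc lapDist μ a - lapDist μ b ≤ max (a - μ - (b - μ)) (μ - 1 - a - (μ - 1 - b)) :=
        max_sub_max_le_max _ _ _ _
    _ = |a - b| := by rw [abs_eq_max_neg]; congr 1 <;> ring

lemma lapPMF_eq (Δ lam : ℝ) (μ k : ℤ) :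
    lapPMF Δ lam μ k = (1 - exp (-(Δ / lam))) / 2 * exp (-(Δ / lam) * lapDist μ k) := by
  unfold lapPMF lapDist
  split_ifs with h
  · rw [max_eq_left (by omega)]
    push_cast
    ring_nf
  · rw [max_eq_right (by omega)]
    have : exp (Δ / lam) - 1 = (1 - exp (-(Δ / lam))) * exp (Δ / lam) := by
      rw [sub_mul, ← exp_add]; simp
    rw [this, mul_div_right_comm, mul_assoc, ← exp_add]
    push_cast
    ring_nf

lemma one_sub_exp_neg_nonneg {c : ℝ} (h : 0 ≤ c) : 0 ≤ 1 - exp (-c) :=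
  sub_nonneg.2 (exp_le_one_iff.2 (neg_nonpos.2 h))

lemma lapPMF_nonneg {Δ lam : ℝ} (h : 0 ≤ Δ / lam) (μ k : ℤ) : 0 ≤ lapPMF Δ lam μ k := by
  have := one_sub_exp_neg_nonneg h
  rw [lapPMF_eq]
  positivity

lemma lapPMF_sub_le_exp_mul {Δ lam : ℝ} (h : 0 ≤ Δ / lam) (μ k j : ℤ) :
    lapPMF Δ lam μ (k - j) ≤ exp (Δ / lam * |j|) * lapPMF Δ lam μ k := by
  have hd : (lapDist μ k : ℝ) - lapDist μ (k - j) ≤ |j| := by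
    exact_mod_cast (sub_sub_cancel k j ▸ lapDist_sub_le μ k (k - j))
  have hA : 0 ≤ (1 - exp (-(Δ / lam))) / 2 := by
    have := one_sub_exp_neg_nonneg h
    positivity
  rw [lapPMF_eq, lapPMF_eq, mul_left_comm, ← exp_add]
  gcongr
  linarith [mul_le_mul_of_nonneg_left hd h]

theorem laplace_ratio_bound_general
    (Δ lam : ℝ) (hΔ : 0 < Δ) (hlam : 0 < lam)
    (μ : ℤ) (M : ℤ) :
    ∀ k j : ℤ, |j| ≤ M →
      lapPMF Δ lam μ (k - j) ≤ Real.exp (((M : ℝ) * Δ + Δ) / lam) * lapPMF Δ lam μ k := by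
  intro k j hj
  have hc : 0 ≤ Δ / lam := by positivity
  have hjM : Δ / lam * |j| ≤ ((M : ℝ) * Δ + Δ) / lam := by
    have : ((|j| : ℤ) : ℝ) ≤ M := by exact_mod_cast hj
    rw [div_mul_eq_mul_div]
    gcongr
    nlinarith
  calc lapPMF Δ lam μ (k - j) ≤ exp (Δ / lam * |j|) * lapPMF Δ lam μ k :=
        lapPMF_sub_le_exp_mul hc μ k j
    _ ≤ exp (((M : ℝ) * Δ + Δ) / lam) * lapPMF Δ lam μ k := by
        gcongr
        exact lapPMF_nonneg hc μ k

/-- For the discretized Laplacian noise, the adjacent probability ratio satisfies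
`p_θ(k - m₀) ≤ e^{(m+Δ)/λ} · p_θ(k)` for all `k ∈ Δℤ` and all shifts `m₀ ∈ [-m, m] ∩ Δℤ`
(adjacency `m = M·Δ`). -/
theorem laplace_ratio_bound
    (Δ lam : ℝ) (hΔ : 0 < Δ) (hlam : 0 < lam)
    (μ : ℤ) (M : ℤ) (hM : 0 < M) :
    ∀ k j : ℤ, |j| ≤ M →
      lapPMF Δ lam μ (k - j) ≤ Real.exp (((M : ℝ) * Δ + Δ) / lam) * lapPMF Δ lam μ k :=
  laplace_ratio_bound_general Δ lam hΔ hlam μ M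
end

section
/- The discrete Uniform mechanism, with noise PMF p_θ(k) = Δ/(b − a + Δ) for a ≤ k ≤ b (k ∈ Δℤ) and 0 elsewhere, is (0, δ)-differentially private with δ = mΔ/(b − a + Δ): for any m-adjacent x, y and any O ⊆ Δℤ, Pr[x + θ ∈ O] ≤ Pr[y + θ ∈ O] + mΔ/(b − a + Δ). -/
/-- Discrete Uniform PMF on `[a, b] ∩ Δℤ` (index `k : ℤ` stands for the point `k·Δ`,
and `a, b` are lattice indices): `p_θ(k) = Δ/(bΔ - aΔ + Δ)` for `a ≤ k ≤ b`, else `0`. -/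
noncomputable def unifPMF (Δ : ℝ) (a b : ℤ) (k : ℤ) : ℝ :=
  if a ≤ k ∧ k ≤ b then Δ / (Δ * b - Δ * a + Δ) else 0

/-- The discrete Uniform mechanism is `(0, δ)`-differentially private with
`δ = mΔ/(b - a + Δ)`: for any `m`-adjacent `x, y` (adjacency `m = M·Δ`) and any `O ⊆ Δℤ`,
`Pr[x + θ ∈ O] ≤ Pr[y + θ ∈ O] + mΔ/(b - a + Δ)`. -/
theorem uniform_mechanism_zero_delta_dp
    (Δ : ℝ) (hΔ : 0 < Δ) (a b : ℤ) (hab : a ≤ b)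
    (M : ℤ) (hM : 0 < M) (hMba : M ≤ b - a + 1) :
    ∀ x y : ℤ, |x - y| ≤ M → ∀ O : Set ℤ,
      (∑' k : O, unifPMF Δ a b ((k : ℤ) - x))
        ≤ (∑' k : O, unifPMF Δ a b ((k : ℤ) - y))
            + ((M : ℝ) * Δ) / (Δ * b - Δ * a + Δ) := by
  intro x y hxy O
  rw [abs_le] at hxy
  have hden : (0:ℝ) < Δ * b - Δ * a + Δ := by
    have h1 : Δ * b - Δ * a + Δ = Δ * ((b:ℝ) - a + 1) := by ring
    rw [h1]
    apply mul_pos hΔ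
    have : (a:ℝ) ≤ b := by exact_mod_cast hab
    linarith
  set c : ℝ := Δ / (Δ * b - Δ * a + Δ) with hc_def
  have hc : 0 < c := div_pos hΔ hden
  set D : Finset ℤ := Finset.Icc (a+x) (b+x) \ Finset.Icc (a+y) (b+y) with hD
  -- pointwise bound
  have hpt : ∀ k : ℤ, unifPMF Δ a b (k - x) ≤
      unifPMF Δ a b (k - y) + c * (if k ∈ D then (1:ℝ) else 0) := by
    intro k
    unfold unifPMF
    by_cases h1 : a ≤ k - x ∧ k - x ≤ b
    · by_cases h2 : a ≤ k - y ∧ k - y ≤ b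
      · rw [if_pos h1, if_pos h2]
        have h3 : (0:ℝ) ≤ (if k ∈ D then (1:ℝ) else 0) := by split_ifs <;> norm_num
        nlinarith [mul_nonneg hc.le h3]
      · have hk : k ∈ D := by
          simp only [hD, Finset.mem_sdiff, Finset.mem_Icc]
          omega
        rw [if_pos h1, if_neg h2, if_pos hk]
        simp [hc_def]
    · rw [if_neg h1]
      have h3 : (0:ℝ) ≤ (if k ∈ D then (1:ℝ) else 0) := by split_ifs <;> norm_num
      have h4 : (0:ℝ) ≤ (if a ≤ k - y ∧ k - y ≤ b then Δ / (Δ * b - Δ * a + Δ) else 0) := by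
        split_ifs
        · exact hc.le
        · exact le_rfl
      have := mul_nonneg hc.le h3
      linarith
  -- summability
  have hsum : ∀ z : ℤ, Summable (fun k : ℤ => unifPMF Δ a b (k - z)) := by
    intro z
    apply summable_of_finite_support
    apply Set.Finite.subset (Set.finite_Icc (a+z) (b+z))
    intro k hk
    simp only [Function.mem_support] at hk
    rw [Set.mem_Icc]
    by_contra h
    apply hk
    unfold unifPMF
    rw [if_neg]
    omega
  have hind : Summable (fun k : ℤ => c * (if k ∈ D then (1:ℝ) else 0)) := by
    apply summable_of_finite_support
    apply Set.Finite.subset D.finite_toSet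
    intro k hk
    simp only [Function.mem_support] at hk
    by_contra h
    apply hk
    rw [if_neg (by simpa using h)]
    ring
  have hsx := (hsum x).subtype O
  have hsy := (hsum y).subtype O
  have hsi := hind.subtype O
  -- card bound
  have hDcard : (D.card : ℝ) ≤ (M : ℝ) := by
    have hcard : D.card ≤ M.toNat := by
      rcases le_total y x with hle | hle
      · have hsub : D ⊆ Finset.Icc (b+y+1) (b+x) := by
          intro k hk
          simp only [hD, Finset.mem_sdiff, Finset.mem_Icc] at hk
          rw [Finset.mem_Icc]
          omega
        have := Finset.card_le_card hsub
        rw [Int.card_Icc] at this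
        omega
      · have hsub : D ⊆ Finset.Icc (a+x) (a+y-1) := by
          intro k hk
          simp only [hD, Finset.mem_sdiff, Finset.mem_Icc] at hk
          rw [Finset.mem_Icc]
          omega
        have := Finset.card_le_card hsub
        rw [Int.card_Icc] at this
        omega
    calc (D.card : ℝ) ≤ (M.toNat : ℝ) := by exact_mod_cast hcard
      _ = (M : ℝ) := by
          rw [← Int.cast_natCast, Int.toNat_of_nonneg hM.le]
  -- tsum of indicator part
  have htind : (∑' k : O, c * (if (k:ℤ) ∈ D then (1:ℝ) else 0)) ≤ c * M := by
    have h1 : (∑' k : O, c * (if (k:ℤ) ∈ D then (1:ℝ) else 0))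
        ≤ (∑' k : ℤ, c * (if k ∈ D then (1:ℝ) else 0)) := by
      apply Summable.tsum_le_tsum_of_inj (Subtype.val) Subtype.val_injective
      · intro k _
        have h3 : (0:ℝ) ≤ (if k ∈ D then (1:ℝ) else 0) := by split_ifs <;> norm_num
        exact mul_nonneg hc.le h3
      · intro k; exact le_refl _
      · exact hsi
      · exact hind
    have h2 : (∑' k : ℤ, c * (if k ∈ D then (1:ℝ) else 0)) = c * D.card := by
      rw [tsum_eq_sum (s := D) (by intro k hk; rw [if_neg hk]; ring)]
      rw [Finset.sum_congr rfl (fun k hk => by rw [if_pos hk])]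
      simp [mul_comm]
    calc (∑' k : O, c * (if (k:ℤ) ∈ D then (1:ℝ) else 0))
        ≤ c * D.card := by rw [← h2]; exact h1
      _ ≤ c * M := by
          apply mul_le_mul_of_nonneg_left hDcard hc.le
  calc (∑' k : O, unifPMF Δ a b ((k:ℤ) - x))
      ≤ (∑' k : O, (unifPMF Δ a b ((k:ℤ) - y) + c * (if (k:ℤ) ∈ D then (1:ℝ) else 0))) := by
        exact Summable.tsum_le_tsum (fun k => hpt k) hsx (hsy.add hsi)
    _ = (∑' k : O, unifPMF Δ a b ((k:ℤ) - y))
        + (∑' k : O, c * (if (k:ℤ) ∈ D then (1:ℝ) else 0)) := Summable.tsum_add hsy hsi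
    _ ≤ (∑' k : O, unifPMF Δ a b ((k:ℤ) - y)) + c * M := by linarith
    _ = (∑' k : O, unifPMF Δ a b ((k:ℤ) - y)) + ((M : ℝ) * Δ) / (Δ * b - Δ * a + Δ) := by
        rw [hc_def]; ring
end
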